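/- Let U ⊆ ℝⁿ be open, let k ≥ 0 be an integer, let 1 ≤ p < ∞, and let C > 0. Let a₁, …, a_N : U → ℝ be smooth functions that are bounded together with all their derivatives up to order k, and set P(u) = Σ_{i=1}^N aᵢ uⁱ (note: no constant term). Then there exists a constant C′ (depending only on n, k, p, N, C, and the bounds on the aᵢ and their derivatives) such that for every u ∈ W^{k,p}(U) satisfying ‖D^j u‖_{L∞(U)} ≤ C for all 0 ≤ j ≤ k, one has ‖P(u)‖_{W^{k,p}(U)} ≤ C′ ‖u‖_{W^{k,p}(U)}, where ‖f‖_{W^{k,p}(U)} = Σ_{j=0}^k ‖D^j f‖_{L^p(U)}. -/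

import Mathlib

/-! With all derivatives of `u` up to order `k` bounded by `C`, Leibniz's rule bounds the
derivatives of `u ^ (i + 1)` pointwise by `(2 ^ k * C) ^ i` times `∑_{j ≤ k} ‖D^j u‖`: each
factor `u` but one is estimated by `C`, and the remaining one keeps the bound linear in `u`.
Multiplying by the `aᵢ` and summing gives the same kind of pointwise bound for `P(u)`, and
Minkowski's inequality turns it into the Sobolev estimate. -/

open MeasureTheory Filter Topology
open scoped ENNReal

noncomputable section

/-- Euclidean space `ℝⁿ`. -/
abbrev Spc (n : ℕ) := EuclideanSpace ℝ (Fin n)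

/-- The Sobolev norm `‖f‖_{W^{k,p}(U)} = ∑_{j=0}^k ‖D^j f‖_{L^p(U)}`, valued in `ℝ≥0∞`;
`f ∈ W^{k,p}(U)` means this quantity is finite. -/
noncomputable def sobolevNorm {n : ℕ} (U : Set (Spc n)) (k : ℕ) (p : ℝ) (f : Spc n → ℝ) :
    ℝ≥0∞ :=
  ∑ j ∈ Finset.range (k + 1),
    (∫⁻ x in U, ENNReal.ofReal (‖iteratedFDerivWithin ℝ j f U x‖ ^ p)) ^ (1 / p)

section JetNorm

variable (𝕜 : Type*) [NontriviallyNormedField 𝕜] {E : Type*} [NormedAddCommGroup E]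
  [NormedSpace 𝕜 E] {F : Type*} [NormedAddCommGroup F] [NormedSpace 𝕜 F]
  {A : Type*} [NormedRing A] [NormedAlgebra 𝕜 A]

def jetNorm (k : ℕ) (u : E → F) (s : Set E) (x : E) : ℝ :=
  ∑ j ∈ Finset.range (k + 1), ‖iteratedFDerivWithin 𝕜 j u s x‖

variable {𝕜}

lemma jetNorm_nonneg (k : ℕ) (u : E → F) (s : Set E) (x : E) : 0 ≤ jetNorm 𝕜 k u s x :=
  Finset.sum_nonneg fun _ _ => norm_nonneg _

lemma norm_iteratedFDerivWithin_le_jetNorm {j k : ℕ} (hj : j ≤ k) (u : E → F) (s : Set E)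
    (x : E) : ‖iteratedFDerivWithin 𝕜 j u s x‖ ≤ jetNorm 𝕜 k u s x :=
  Finset.single_le_sum (f := fun j => ‖iteratedFDerivWithin 𝕜 j u s x‖)
    (fun _ _ => norm_nonneg _) (Finset.mem_range.2 (Nat.lt_succ_of_le hj))

variable {s : Set E} {x : E} {n : WithTop ℕ∞}

lemma norm_iteratedFDerivWithin_mul_le_of_forall_le {f g : E → A}
    (hf : ContDiffOn 𝕜 n f s) (hg : ContDiffOn 𝕜 n g s) (hs : UniqueDiffOn 𝕜 s) (hx : x ∈ s)
    {m : ℕ} (hm : m ≤ n) {Cf Cg : ℝ}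
    (hfC : ∀ l ≤ m, ‖iteratedFDerivWithin 𝕜 l f s x‖ ≤ Cf)
    (hgC : ∀ l ≤ m, ‖iteratedFDerivWithin 𝕜 l g s x‖ ≤ Cg) :
    ‖iteratedFDerivWithin 𝕜 m (fun y => f y * g y) s x‖ ≤ 2 ^ m * Cf * Cg := by
  have hCf : 0 ≤ Cf := (norm_nonneg _).trans (hfC 0 m.zero_le)
  calc ‖iteratedFDerivWithin 𝕜 m (fun y => f y * g y) s x‖
      ≤ ∑ l ∈ Finset.range (m + 1), (m.choose l : ℝ) * ‖iteratedFDerivWithin 𝕜 l f s x‖ *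
          ‖iteratedFDerivWithin 𝕜 (m - l) g s x‖ :=
        norm_iteratedFDerivWithin_mul_le hf hg hs hx hm
    _ ≤ ∑ l ∈ Finset.range (m + 1), (m.choose l : ℝ) * Cf * Cg := by
        gcongr with l hl
        · exact hfC l (Nat.lt_succ_iff.mp (Finset.mem_range.mp hl))
        · exact hgC _ (m.sub_le l)
    _ = 2 ^ m * Cf * Cg := by
        rw [← Finset.sum_mul, ← Finset.sum_mul, ← Nat.cast_sum, Nat.sum_range_choose]
        push_cast; ring

lemma norm_iteratedFDerivWithin_pow_le {k : ℕ} {u : E → A}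
    (hu : ContDiffOn 𝕜 k u s) (hs : UniqueDiffOn 𝕜 s) (hx : x ∈ s) {C : ℝ}
    (hC : ∀ j ≤ k, ‖iteratedFDerivWithin 𝕜 j u s x‖ ≤ C) (i : ℕ) :
    ∀ m ≤ k, ‖iteratedFDerivWithin 𝕜 m (fun y => u y ^ (i + 1)) s x‖ ≤
      (2 ^ k * C) ^ i * jetNorm 𝕜 k u s x := by
  induction i with
  | zero =>
    intro m hm
    simpa using norm_iteratedFDerivWithin_le_jetNorm hm u s x
  | succ i ih =>
    intro m hm
    have hC0 : 0 ≤ C := (norm_nonneg _).trans (hC 0 k.zero_le)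
    have hmk : (m : WithTop ℕ∞) ≤ k := by exact_mod_cast hm
    simp_rw [pow_succ _ (i + 1)]
    calc ‖iteratedFDerivWithin 𝕜 m (fun y => u y ^ (i + 1) * u y) s x‖
        ≤ 2 ^ m * ((2 ^ k * C) ^ i * jetNorm 𝕜 k u s x) * C :=
          norm_iteratedFDerivWithin_mul_le_of_forall_le (hu.pow _) hu hs hx hmk
            (fun l hl => ih l (hl.trans hm)) (fun l hl => hC l (hl.trans hm))
      _ ≤ 2 ^ k * ((2 ^ k * C) ^ i * jetNorm 𝕜 k u s x) * C := by
          have := jetNorm_nonneg (𝕜 := 𝕜) k u s x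
          gcongr
          exact one_le_two
      _ = (2 ^ k * C) ^ (i + 1) * jetNorm 𝕜 k u s x := by ring

lemma norm_iteratedFDerivWithin_sum_mul_pow_le {k N : ℕ} {a : Fin N → E → A} {u : E → A}
    (ha : ∀ i, ContDiffOn 𝕜 k (a i) s) (hu : ContDiffOn 𝕜 k u s) (hs : UniqueDiffOn 𝕜 s)
    (hx : x ∈ s) {B C : ℝ} (hB : ∀ i, ∀ j ≤ k, ‖iteratedFDerivWithin 𝕜 j (a i) s x‖ ≤ B)
    (hC : ∀ j ≤ k, ‖iteratedFDerivWithin 𝕜 j u s x‖ ≤ C) {m : ℕ} (hm : m ≤ k) :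
    ‖iteratedFDerivWithin 𝕜 m (fun y => ∑ i : Fin N, a i y * u y ^ ((i : ℕ) + 1)) s x‖ ≤
      (∑ i : Fin N, 2 ^ k * B * (2 ^ k * C) ^ (i : ℕ)) * jetNorm 𝕜 k u s x := by
  have hmk : (m : WithTop ℕ∞) ≤ k := by exact_mod_cast hm
  have hterm (i : Fin N) :
      ‖iteratedFDerivWithin 𝕜 m (fun y => a i y * u y ^ ((i : ℕ) + 1)) s x‖ ≤
        2 ^ k * B * (2 ^ k * C) ^ (i : ℕ) * jetNorm 𝕜 k u s x := by
    have hB0 : 0 ≤ B := (norm_nonneg _).trans (hB i 0 k.zero_le)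
    have hC0 : 0 ≤ C := (norm_nonneg _).trans (hC 0 k.zero_le)
    have := jetNorm_nonneg (𝕜 := 𝕜) k u s x
    calc _ ≤ 2 ^ m * B * ((2 ^ k * C) ^ (i : ℕ) * jetNorm 𝕜 k u s x) :=
          norm_iteratedFDerivWithin_mul_le_of_forall_le (ha i) (hu.pow _) hs hx hmk
            (fun l hl => hB i l (hl.trans hm))
            (fun l hl => norm_iteratedFDerivWithin_pow_le hu hs hx hC i l (hl.trans hm))
      _ ≤ 2 ^ k * B * ((2 ^ k * C) ^ (i : ℕ) * jetNorm 𝕜 k u s x) := by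
          gcongr
          exact one_le_two
      _ = _ := by ring
  have hsum : iteratedFDerivWithin 𝕜 m (fun y => ∑ i : Fin N, a i y * u y ^ ((i : ℕ) + 1)) s x =
      ∑ i : Fin N, iteratedFDerivWithin 𝕜 m (fun y => a i y * u y ^ ((i : ℕ) + 1)) s x := by
    rw [← iteratedFDerivWithin_sum_apply hs hx
      fun i _ => (((ha i).mul (hu.pow _)).contDiffWithinAt hx).of_le hmk]
    simp only [Finset.sum_fn]
  rw [hsum, Finset.sum_mul]
  exact (norm_sum_le _ _).trans (Finset.sum_le_sum fun i _ => hterm i)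

end JetNorm

section Sobolev

variable {n k : ℕ} {U : Set (Spc n)} {p : ℝ}

lemma sobolevNorm_eq_sum_eLpNorm (hp : 0 < p) (f : Spc n → ℝ) :
    sobolevNorm U k p f = ∑ j ∈ Finset.range (k + 1),
      eLpNorm (iteratedFDerivWithin ℝ j f U) (ENNReal.ofReal p) (volume.restrict U) := by
  refine Finset.sum_congr rfl fun j _ => ?_
  rw [eLpNorm_eq_eLpNorm' (by simpa using hp) ENNReal.ofReal_ne_top,
    eLpNorm'_eq_lintegral_enorm, ENNReal.toReal_ofReal hp.le]
  simp_rw [← ofReal_norm, ENNReal.ofReal_rpow_of_nonneg (norm_nonneg _) hp.le]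

lemma eLpNorm_jetNorm_le_sobolevNorm (hU : IsOpen U) (hp : 1 ≤ p) {u : Spc n → ℝ}
    (hu : ContDiffOn ℝ k u U) :
    eLpNorm (jetNorm ℝ k u U) (ENNReal.ofReal p) (volume.restrict U) ≤ sobolevNorm U k p u := by
  have hmeas : ∀ j ∈ Finset.range (k + 1), AEStronglyMeasurable
      (fun x => ‖iteratedFDerivWithin ℝ j u U x‖) (volume.restrict U) := fun j hj =>
    ((hu.continuousOn_iteratedFDerivWithin (by exact_mod_cast Finset.mem_range_succ_iff.mp hj)
      hU.uniqueDiffOn).norm).aestronglyMeasurable hU.measurableSet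
  have hsum : jetNorm ℝ k u U =
      ∑ j ∈ Finset.range (k + 1), fun x => ‖iteratedFDerivWithin ℝ j u U x‖ := by
    ext x; simp [jetNorm]
  rw [hsum, sobolevNorm_eq_sum_eLpNorm (by linarith)]
  refine (eLpNorm_sum_le hmeas (by simpa using hp)).trans_eq ?_
  simp only [eLpNorm_norm]

lemma sobolevNorm_le_of_norm_iteratedFDerivWithin_le (hU : IsOpen U) (hp : 1 ≤ p)
    {u f : Spc n → ℝ} (hu : ContDiffOn ℝ k u U) {M : ℝ}
    (hf : ∀ j ≤ k, ∀ x ∈ U, ‖iteratedFDerivWithin ℝ j f U x‖ ≤ M * jetNorm ℝ k u U x) :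
    sobolevNorm U k p f ≤ (k + 1) * ENNReal.ofReal M * sobolevNorm U k p u := by
  have hterm : ∀ j ∈ Finset.range (k + 1),
      eLpNorm (iteratedFDerivWithin ℝ j f U) (ENNReal.ofReal p) (volume.restrict U) ≤
        ENNReal.ofReal M * sobolevNorm U k p u := fun j hj => by
    refine (eLpNorm_le_mul_eLpNorm_of_ae_le_mul ?_ _).trans
      (mul_le_mul_right (eLpNorm_jetNorm_le_sobolevNorm hU hp hu) _)
    refine (ae_restrict_iff' hU.measurableSet).2 (Eventually.of_forall fun x hx => ?_)
    rw [Real.norm_of_nonneg (jetNorm_nonneg k u U x)]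
    exact hf j (Finset.mem_range_succ_iff.mp hj) x hx
  rw [sobolevNorm_eq_sum_eLpNorm (by linarith) f]
  refine (Finset.sum_le_sum hterm).trans_eq ?_
  rw [Finset.sum_const, Finset.card_range, nsmul_eq_mul, mul_assoc]
  norm_cast

end Sobolev

theorem polynomial_sobolev_bound_general
    {n N k : ℕ}
    (U : Set (Spc n)) (hU : IsOpen U)
    (p : ℝ) (hp : 1 ≤ p)
    (C : ℝ)
    (a : Fin N → Spc n → ℝ)
    (ha_smooth : ∀ i, ContDiffOn ℝ (k : ℕ∞) (a i) U)
    (B : ℝ) (haB : ∀ i, ∀ j ≤ k, ∀ x ∈ U, ‖iteratedFDerivWithin ℝ j (a i) U x‖ ≤ B) :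
    ∃ C' : ℝ≥0∞, C' < ⊤ ∧
      ∀ u : Spc n → ℝ, ContDiffOn ℝ (k : ℕ∞) u U →
        sobolevNorm U k p u < ⊤ →
        (∀ j ≤ k, ∀ x ∈ U, ‖iteratedFDerivWithin ℝ j u U x‖ ≤ C) →
        sobolevNorm U k p (fun x => ∑ i : Fin N, a i x * u x ^ ((i : ℕ) + 1)) ≤
          C' * sobolevNorm U k p u := by
  refine ⟨(k + 1) * ENNReal.ofReal (∑ i : Fin N, 2 ^ k * B * (2 ^ k * C) ^ (i : ℕ)),
    by finiteness, fun u hu _ huC => ?_⟩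
  exact sobolevNorm_le_of_norm_iteratedFDerivWithin_le hU hp hu fun j hj x hx =>
    norm_iteratedFDerivWithin_sum_mul_pow_le ha_smooth hu hU.uniqueDiffOn hx
      (fun i l hl => haB i l hl x hx) (fun l hl => huC l hl x hx) hj

/-- Let `U ⊆ ℝⁿ` be open, `k ≥ 0`, `1 ≤ p < ∞`, `C > 0`. Let
`a₁, …, a_N` be smooth on `U`, bounded with all derivatives up to order `k` bounded, and
let `P(u) = ∑_{i=1}^N aᵢ uⁱ` (no constant term). Then there is `C' < ∞`, depending only on
the data and not on `u`, such that every `u ∈ W^{k,p}(U)` whose derivatives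
`D^j u`, `0 ≤ j ≤ k`, are bounded by `C` on `U` satisfies
`‖P(u)‖_{W^{k,p}(U)} ≤ C' ‖u‖_{W^{k,p}(U)}`. -/
theorem polynomial_sobolev_bound
    {n N k : ℕ} (hN : 1 ≤ N)
    (U : Set (Spc n)) (hU : IsOpen U)
    (p : ℝ) (hp : 1 ≤ p)
    (C : ℝ) (hC : 0 < C)
    (a : Fin N → Spc n → ℝ)
    (ha_smooth : ∀ i, ContDiffOn ℝ (k : ℕ∞) (a i) U)
    (B : ℝ) (haB : ∀ i, ∀ j ≤ k, ∀ x ∈ U, ‖iteratedFDerivWithin ℝ j (a i) U x‖ ≤ B) :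
    ∃ C' : ℝ≥0∞, C' < ⊤ ∧
      ∀ u : Spc n → ℝ, ContDiffOn ℝ (k : ℕ∞) u U →
        sobolevNorm U k p u < ⊤ →
        (∀ j ≤ k, ∀ x ∈ U, ‖iteratedFDerivWithin ℝ j u U x‖ ≤ C) →
        sobolevNorm U k p (fun x => ∑ i : Fin N, a i x * u x ^ ((i : ℕ) + 1)) ≤
          C' * sobolevNorm U k p u :=
  polynomial_sobolev_bound_general U hU p hp C a ha_smooth B haB
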